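/- arXiv:2305.11509 — 5 statements merged into one kernel-verified Lean document; each statement's English description precedes it below -/
import Mathlib

section
/- Let X_1, …, X_T be i.i.d. samples from μ and set Y_T^max = max_{1≤i≤T} f(X_i). Then for every ε ∈ (0,1), with probability at least 1 − ε, the optimality gap satisfies f* − Y_T^max ≤ L·Θ·((1 − ε^{1/T})/κ_s)^{1/d_s}. -/
/-!
Put `ρ = ε^{1/T}` and `a = ((1 - ρ) / κs)^{1/ds}`, so that `κs a^{ds} = 1 - ρ`. By the scattering
inequality at level `min a 1`, a single sample lands below `f* - min a 1 · (f* - f_min)` with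
probability at most `ρ`; by independence all `T` samples do so with probability at most
`ρ^T = ε`. Outside that event some sample is within `min a 1 · (f* - f_min) ≤ a L Θ` of `f*`,
because a Lipschitz function oscillates by at most `L` times the diameter.
-/

open MeasureTheory ProbabilityTheory Real

open Set in
theorem LipschitzWith.iSup_sub_iInf_le_mul_diam {α : Type*} [PseudoMetricSpace α]
    [BoundedSpace α] [Nonempty α] {K : NNReal} {f : α → ℝ} (hf : LipschitzWith K f) :
    (⨆ x, f x) - ⨅ x, f x ≤ K * Metric.diam (univ : Set α) := by
  have hbdd : Bornology.IsBounded (range f) := by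
    simpa only [image_univ] using hf.isBounded_image (Bornology.IsBounded.all univ)
  calc (⨆ x, f x) - ⨅ x, f x = Metric.diam (range f) := by
        rw [Real.diam_eq hbdd, sSup_range, sInf_range]
    _ ≤ K * Metric.diam (univ : Set α) := by
      simpa only [image_univ] using hf.diam_image_le univ (Bornology.IsBounded.all univ)

def ScatteringInequality {α : Type*} [MeasurableSpace α] (μ : Measure α) (f : α → ℝ)
    (fstar fmin κ d : ℝ) : Prop :=
  ∀ a ∈ Set.Ioc (0 : ℝ) 1,
    μ {x | f x < fstar - a * (fstar - fmin)} ≤ ENNReal.ofReal (1 - κ * a ^ d)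

theorem ScatteringInequality.measure_lt_sub_min_mul_le {α : Type*} [MeasurableSpace α]
    {μ : Measure α} {f : α → ℝ} {fstar fmin κ d a u : ℝ}
    (hscatter : ScatteringInequality μ f fstar fmin κ d) (hmin : ∀ x, fmin ≤ f x)
    (ha : 0 < a) (hu : u ≤ κ * a ^ d) :
    μ {x | f x < fstar - min a 1 * (fstar - fmin)} ≤ ENNReal.ofReal (1 - u) := by
  rcases le_or_gt a 1 with hle | hgt
  · rw [min_eq_left hle]
    exact (hscatter a ⟨ha, hle⟩).trans (ENNReal.ofReal_le_ofReal (by linarith))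
  · rw [min_eq_right hgt.le, one_mul, sub_sub_cancel]
    simp [not_lt.2 (hmin _)]

theorem ProbabilityTheory.iIndepFun.measure_iInter_preimage_eq_pow {Ω α ι : Type*} [Fintype ι]
    [MeasurableSpace Ω] [MeasurableSpace α] {P : Measure Ω} {μ : Measure α} {X : ι → Ω → α}
    (hiid : iIndepFun X P) (hmeas : ∀ i, Measurable (X i)) (hlaw : ∀ i, P.map (X i) = μ)
    {A : Set α} (hA : MeasurableSet A) :
    P (⋂ i, X i ⁻¹' A) = μ A ^ Fintype.card ι := by
  rw [hiid.meas_iInter fun i => ⟨A, hA, rfl⟩, ← Finset.card_univ, ← Finset.prod_const]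
  exact Finset.prod_congr rfl fun i _ => by rw [← hlaw i, Measure.map_apply (hmeas i) hA]

theorem ProbabilityTheory.iIndepFun.ofReal_one_sub_le_measure_exists_notMem
    {Ω α : Type*} [MeasurableSpace Ω] [MeasurableSpace α] {P : Measure Ω}
    [IsProbabilityMeasure P] {μ : Measure α} {T : ℕ} {X : Fin T → Ω → α}
    (hiid : iIndepFun X P) (hmeas : ∀ i, Measurable (X i)) (hlaw : ∀ i, P.map (X i) = μ)
    (hT : T ≠ 0) {A : Set α} (hA : MeasurableSet A) {ε : ℝ} (hε : 0 ≤ ε)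
    (hμA : μ A ≤ ENNReal.ofReal (ε ^ ((1 : ℝ) / T))) :
    ENNReal.ofReal (1 - ε) ≤ P {ω | ∃ i, X i ω ∉ A} := by
  have hmiss : P (⋂ i, X i ⁻¹' A) ≤ ENNReal.ofReal ε := by
    rw [hiid.measure_iInter_preimage_eq_pow hmeas hlaw hA, Fintype.card_fin]
    calc μ A ^ T ≤ ENNReal.ofReal (ε ^ ((1 : ℝ) / T)) ^ T := pow_le_pow_left' hμA T
      _ = ENNReal.ofReal ε := by
        rw [← ENNReal.ofReal_pow (by positivity), one_div, rpow_inv_natCast_pow hε hT]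
  have hcompl : {ω | ∃ i, X i ω ∉ A} = (⋂ i, X i ⁻¹' A)ᶜ := by
    ext ω
    simp
  calc ENNReal.ofReal (1 - ε) = 1 - ENNReal.ofReal ε := by
        rw [ENNReal.ofReal_sub _ hε, ENNReal.ofReal_one]
    _ ≤ 1 - P (⋂ i, X i ⁻¹' A) := tsub_le_tsub_left hmiss 1
    _ = P {ω | ∃ i, X i ω ∉ A} := by
      rw [hcompl, prob_compl_eq_one_sub (.iInter fun i => hmeas i hA)]

theorem random_search_high_probability_bound_general
    {𝒳 : Type*} [MetricSpace 𝒳] [CompactSpace 𝒳] [MeasurableSpace 𝒳] [BorelSpace 𝒳]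
    (μ : Measure 𝒳)
    (f : 𝒳 → ℝ) (L : ℝ) (hL : 0 ≤ L) (hf : LipschitzWith L.toNNReal f)
    (fstar fmin Θ : ℝ)
    (hfstar : fstar = ⨆ x, f x) (hfmin : fmin = ⨅ x, f x)
    (hΘ : Θ = Metric.diam (Set.univ : Set 𝒳))
    (ds κs : ℝ) (hds : 0 < ds) (hκs : κs ∈ Set.Ioc (0 : ℝ) 1)
    (hscatter : ∀ α ∈ Set.Ioc (0 : ℝ) 1,
      μ {x | f x < fstar - α * (fstar - fmin)} ≤ ENNReal.ofReal (1 - κs * α ^ ds))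
    {Ω : Type*} [MeasurableSpace Ω] (P : Measure Ω) [IsProbabilityMeasure P]
    (T : ℕ) (hT : 0 < T)
    (X : Fin T → Ω → 𝒳) (hXmeas : ∀ i, Measurable (X i))
    (hiid : iIndepFun X P)
    (hlaw : ∀ i, Measure.map (X i) P = μ)
    (ε : ℝ) (hε : ε ∈ Set.Ioo (0 : ℝ) 1) :
    ENNReal.ofReal (1 - ε) ≤
      P {ω | fstar - (⨆ i, f (X i ω))
        ≤ L * Θ * ((1 - ε ^ ((1 : ℝ) / T)) / κs) ^ ((1 : ℝ) / ds)} := by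
  have : Nonempty Ω := nonempty_of_isProbabilityMeasure P
  have : Nonempty 𝒳 := ⟨X ⟨0, hT⟩ (Classical.arbitrary Ω)⟩
  have hmin : ∀ x, fmin ≤ f x :=
    fun x => hfmin ▸ ciInf_le (isCompact_range hf.continuous).bddBelow x
  have hgap : fstar - fmin ≤ L * Θ := by
    simpa only [hfstar, hfmin, hΘ, coe_toNNReal L hL] using hf.iSup_sub_iInf_le_mul_diam
  have hLΘ : 0 ≤ L * Θ := mul_nonneg hL (hΘ ▸ Metric.diam_nonneg)
  set ρ := ε ^ ((1 : ℝ) / T)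
  set a := ((1 - ρ) / κs) ^ ((1 : ℝ) / ds)
  have hρ : ρ < 1 := rpow_lt_one hε.1.le hε.2 (by positivity)
  have ha : 0 < a := rpow_pos_of_pos (div_pos (by linarith) hκs.1) _
  have hκa : κs * a ^ ds = 1 - ρ := by
    rw [← rpow_mul (div_pos (by linarith) hκs.1).le, one_div_mul_cancel hds.ne', rpow_one,
      mul_div_cancel₀ _ hκs.1.ne']
  have hμA : μ {x | f x < fstar - min a 1 * (fstar - fmin)} ≤ ENNReal.ofReal ρ := by
    simpa using ScatteringInequality.measure_lt_sub_min_mul_le hscatter hmin ha hκa.ge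
  refine (hiid.ofReal_one_sub_le_measure_exists_notMem hXmeas hlaw hT.ne'
    (measurableSet_lt hf.continuous.measurable measurable_const) hε.1.le hμA).trans
    (measure_mono ?_)
  rintro ω ⟨i, hi⟩
  simp only [Set.mem_ofPred_eq, not_lt] at hi ⊢
  calc fstar - ⨆ j, f (X j ω) ≤ fstar - f (X i ω) := by
        gcongr; exact le_ciSup (f := fun j => f (X j ω)) (Set.finite_range _).bddAbove i
    _ ≤ min a 1 * (L * Θ) := by nlinarith [le_min ha.le zero_le_one]
    _ ≤ L * Θ * a := by rw [mul_comm]; gcongr; exact min_le_left _ _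

/-- **Random search, high-probability optimality-gap bound (Theorem `thm:rs`).**
If `X 1, …, X T` are i.i.d. samples from `μ` and `Y = max_i f (X i)`, then for every
`ε ∈ (0,1)`, with probability at least `1 - ε`,
`f* - Y ≤ L Θ ((1 - ε^{1/T}) / κs)^{1/ds}`. -/
theorem random_search_high_probability_bound
    {𝒳 : Type*} [MetricSpace 𝒳] [CompactSpace 𝒳] [MeasurableSpace 𝒳] [BorelSpace 𝒳]
    (μ : Measure 𝒳) [IsProbabilityMeasure μ]
    (f : 𝒳 → ℝ) (L : ℝ) (hL : 0 ≤ L) (hf : LipschitzWith L.toNNReal f)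
    (fstar fmin Θ : ℝ)
    (hfstar : fstar = ⨆ x, f x) (hfmin : fmin = ⨅ x, f x)
    (hΘ : Θ = Metric.diam (Set.univ : Set 𝒳))
    (ds κs : ℝ) (hds : 0 < ds) (hκs : κs ∈ Set.Ioc (0 : ℝ) 1)
    (hscatter : ∀ α ∈ Set.Ioc (0 : ℝ) 1,
      μ {x | f x < fstar - α * (fstar - fmin)} ≤ ENNReal.ofReal (1 - κs * α ^ ds))
    {Ω : Type*} [MeasurableSpace Ω] (P : Measure Ω) [IsProbabilityMeasure P]
    (T : ℕ) (hT : 0 < T)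
    (X : Fin T → Ω → 𝒳) (hXmeas : ∀ i, Measurable (X i))
    (hiid : iIndepFun X P)
    (hlaw : ∀ i, Measure.map (X i) P = μ)
    (ε : ℝ) (hε : ε ∈ Set.Ioo (0 : ℝ) 1) :
    ENNReal.ofReal (1 - ε) ≤
      P {ω | fstar - (⨆ i, f (X i ω))
        ≤ L * Θ * ((1 - ε ^ ((1 : ℝ) / T)) / κs) ^ ((1 : ℝ) / ds)} :=
  random_search_high_probability_bound_general μ f L hL hf fstar fmin Θ hfstar hfmin hΘ ds κs hds
    hκs hscatter P T hT X hXmeas hiid hlaw ε hε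
end

section
/- Let X be a random variable with law μ on 𝒳 and let Z be a real random variable independent of X whose law is supported on [0, b−a] and absolutely continuous with density bounded below by κ_p > 0 on [0, b−a]. Then for every β with 0 < β ≤ min(1, b−a), the probability that (f* − f(X))/(L·Θ) + Z > β is at most 1 − (κ_s·κ_p/(d_s + 1))·β^{d_s + 1}. -/
open MeasureTheory ProbabilityTheory Real

private lemma ofReal_max_zero (s : ℝ) :
    ENNReal.ofReal (max s 0) = ENNReal.ofReal s := by
  rcases le_total s 0 with h | h
  · rw [max_eq_right h, ENNReal.ofReal_zero, ENNReal.ofReal_of_nonpos h]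
  · rw [max_eq_left h]

/-- **One-sample noisy bound (inequality `eq:noisy-mos-bound`).**
Let `X ~ μ` and let `Z` be a real random variable independent of `X`, whose law has a
density (w.r.t. Lebesgue measure) supported on `[0, b-a]` and bounded below by `κp`
there. Then for `0 < β ≤ min 1 (b-a)`,
`ℙ ((f* - f X)/(L Θ) + Z > β) ≤ 1 - (κs κp / (ds+1)) β^{ds+1}`. -/
theorem noisy_single_sample_bound
    {𝒳 : Type*} [MetricSpace 𝒳] [CompactSpace 𝒳] [MeasurableSpace 𝒳] [BorelSpace 𝒳]
    (μ : Measure 𝒳) [IsProbabilityMeasure μ]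
    (f : 𝒳 → ℝ) (L : ℝ) (hL : 0 ≤ L) (hf : LipschitzWith L.toNNReal f)
    (fstar fmin Θ : ℝ)
    (hfstar : fstar = ⨆ x, f x) (hfmin : fmin = ⨅ x, f x)
    (hΘ : Θ = Metric.diam (Set.univ : Set 𝒳))
    (ds κs : ℝ) (hds : 0 < ds) (hκs : κs ∈ Set.Ioc (0 : ℝ) 1)
    (hscatter : ∀ α ∈ Set.Ioc (0 : ℝ) 1,
      μ {x | f x < fstar - α * (fstar - fmin)} ≤ ENNReal.ofReal (1 - κs * α ^ ds))
    (a b : ℝ) (hab : a < b) (κp : ℝ) (hκp : 0 < κp)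
    {Ω : Type*} [MeasurableSpace Ω] (P : Measure Ω) [IsProbabilityMeasure P]
    (X : Ω → 𝒳) (Z : Ω → ℝ) (hX : Measurable X) (hZ : Measurable Z)
    (hindep : IndepFun X Z P)
    (hXlaw : Measure.map X P = μ)
    (g : ℝ → ENNReal) (hg : Measurable g)
    (hZlaw : Measure.map Z P = volume.withDensity g)
    (hsupp : ∀ x ∉ Set.Icc (0 : ℝ) (b - a), g x = 0)
    (hlb : ∀ x ∈ Set.Icc (0 : ℝ) (b - a), ENNReal.ofReal κp ≤ g x)
    (β : ℝ) (hβ0 : 0 < β) (hβ : β ≤ min 1 (b - a)) :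
    P {ω | (fstar - f (X ω)) / (L * Θ) + Z ω > β}
      ≤ ENNReal.ofReal (1 - κs * κp / (ds + 1) * β ^ (ds + 1)) := by
  have hβ1 : β ≤ 1 := le_trans hβ (min_le_left _ _)
  have hβba : β ≤ b - a := le_trans hβ (min_le_right _ _)
  -- nonemptiness
  haveI hne : Nonempty 𝒳 := by
    by_contra hc
    rw [not_nonempty_iff] at hc
    have h1 : μ Set.univ = 1 := measure_univ
    rw [Set.eq_empty_of_isEmpty (Set.univ : Set 𝒳), measure_empty] at h1
    exact zero_ne_one h1
  have hfc : Continuous f := hf.continuous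
  have hbddA : BddAbove (Set.range f) := by
    have := (isCompact_univ.image hfc).bddAbove
    rwa [Set.image_univ] at this
  have hbddB : BddBelow (Set.range f) := by
    have := (isCompact_univ.image hfc).bddBelow
    rwa [Set.image_univ] at this
  have hfle : ∀ x, f x ≤ fstar := fun x => hfstar ▸ le_ciSup hbddA x
  have hfge : ∀ x, fmin ≤ f x := fun x => hfmin ▸ ciInf_le hbddB x
  have hT : 0 ≤ L * Θ := mul_nonneg hL (hΘ ▸ Metric.diam_nonneg)
  -- gap bound
  have hgap : fstar - fmin ≤ L * Θ := by
    have hd : ∀ x x', f x - f x' ≤ L * Θ := by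
      intro x x'
      have h1 := hf.dist_le_mul x x'
      rw [Real.dist_eq, Real.coe_toNNReal L hL] at h1
      have h2 : dist x x' ≤ Θ :=
        hΘ ▸ Metric.dist_le_diam_of_mem isCompact_univ.isBounded trivial trivial
      have h3 : L * dist x x' ≤ L * Θ := mul_le_mul_of_nonneg_left h2 hL
      calc f x - f x' ≤ |f x - f x'| := le_abs_self _
        _ ≤ L * dist x x' := h1
        _ ≤ L * Θ := h3
    have h3 : ∀ x, f x ≤ fmin + L * Θ := by
      intro x
      have h4 : f x - L * Θ ≤ fmin := by
        rw [hfmin]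
        exact le_ciInf (fun x' => by linarith [hd x x'])
      linarith
    have h4 : fstar ≤ fmin + L * Θ := hfstar ▸ ciSup_le h3
    linarith
  set h : 𝒳 → ℝ := fun x => (fstar - f x) / (L * Θ) with hh_def
  have hh0 : ∀ x, 0 ≤ h x := fun x => div_nonneg (by linarith [hfle x]) hT
  have hmeas_h : Measurable h := (measurable_const.sub hfc.measurable).div_const _
  -- sublevel bound for h under μ
  have hmu : ∀ α ∈ Set.Ioc (0 : ℝ) 1,
      ENNReal.ofReal (κs * α ^ ds) ≤ μ {x | h x ≤ α} := by
    rintro α ⟨hα0, hα1⟩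
    have hS : MeasurableSet {x | f x < fstar - α * (fstar - fmin)} :=
      measurableSet_lt hfc.measurable measurable_const
    have hCsub : {x | f x < fstar - α * (fstar - fmin)}ᶜ ⊆ {x | h x ≤ α} := by
      intro x hx
      simp only [Set.mem_compl_iff, Set.mem_setOf_eq, not_lt] at hx
      simp only [Set.mem_setOf_eq, hh_def]
      rcases hT.eq_or_lt with hT0 | hT0
      · rw [← hT0, div_zero]; exact hα0.le
      · rw [div_le_iff₀ hT0]
        have : α * (fstar - fmin) ≤ α * (L * Θ) :=
          mul_le_mul_of_nonneg_left hgap hα0.le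
        linarith
    have hc0 : 0 ≤ κs * α ^ ds :=
      mul_nonneg hκs.1.le (Real.rpow_nonneg hα0.le ds)
    have hc1 : κs * α ^ ds ≤ 1 :=
      mul_le_one₀ hκs.2 (Real.rpow_nonneg hα0.le ds)
        (Real.rpow_le_one hα0.le hα1 hds.le)
    have key : ENNReal.ofReal (κs * α ^ ds) + ENNReal.ofReal (1 - κs * α ^ ds) = 1 := by
      rw [← ENNReal.ofReal_add hc0 (by linarith)]
      norm_num
    have h2 : ENNReal.ofReal (κs * α ^ ds)
        = 1 - ENNReal.ofReal (1 - κs * α ^ ds) :=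
      ENNReal.eq_sub_of_add_eq ENNReal.ofReal_ne_top key
    calc ENNReal.ofReal (κs * α ^ ds)
        = 1 - ENNReal.ofReal (1 - κs * α ^ ds) := h2
      _ ≤ 1 - μ {x | f x < fstar - α * (fstar - fmin)} :=
          tsub_le_tsub_left (hscatter α ⟨hα0, hα1⟩) 1
      _ = μ {x | f x < fstar - α * (fstar - fmin)}ᶜ :=
          (prob_compl_eq_one_sub hS).symm
      _ ≤ μ {x | h x ≤ α} := measure_mono hCsub
  set νY : Measure ℝ := Measure.map (h ∘ X) P with hνY_def
  set νZ : Measure ℝ := Measure.map Z P with hνZ_def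
  have hhX : Measurable (h ∘ X) := hmeas_h.comp hX
  -- joint law is product
  have hprod : Measure.map (fun ω => (h (X ω), Z ω)) P = νY.prod νZ := by
    have hi : IndepFun (h ∘ X) (id ∘ Z) P := hindep.comp hmeas_h measurable_id
    have := (indepFun_iff_map_prod_eq_prod_map_map hhX.aemeasurable
      (measurable_id.comp hZ).aemeasurable).mp hi
    simpa [Function.comp] using this
  -- inner bound
  have hinner : ∀ y : ℝ, ENNReal.ofReal (κp * (β - max y 0)) ≤ νZ {z | y + z ≤ β} := by
    intro y
    set m := max y 0 with hm_def
    rcases le_or_gt (β - m) 0 with hbm | hbm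
    · rw [ENNReal.ofReal_of_nonpos (mul_nonpos_iff.mpr (Or.inl ⟨hκp.le, hbm⟩))]
      exact zero_le
    · have hm0 : 0 ≤ m := le_max_right _ _
      have hsub : Set.Icc (0 : ℝ) (β - m) ⊆ {z | y + z ≤ β} := by
        intro z hz
        have hy : y ≤ m := le_max_left _ _
        simp only [Set.mem_Icc] at hz
        simp only [Set.mem_setOf_eq]
        linarith [hz.2]
      have hIccsub : Set.Icc (0 : ℝ) (β - m) ⊆ Set.Icc (0 : ℝ) (b - a) :=
        Set.Icc_subset_Icc le_rfl (by linarith)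
      calc ENNReal.ofReal (κp * (β - m))
          = ENNReal.ofReal κp * ENNReal.ofReal (β - m) :=
            ENNReal.ofReal_mul hκp.le
        _ = ENNReal.ofReal κp * volume (Set.Icc (0 : ℝ) (β - m)) := by
            rw [Real.volume_Icc, sub_zero]
        _ = ∫⁻ _ in Set.Icc (0 : ℝ) (β - m), ENNReal.ofReal κp := by
            rw [setLIntegral_const]
        _ ≤ ∫⁻ z in Set.Icc (0 : ℝ) (β - m), g z := by
            refine lintegral_mono_ae ((ae_restrict_iff' measurableSet_Icc).mpr
              (ae_of_all _ fun z hz => hlb z (hIccsub hz)))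
        _ = νZ (Set.Icc (0 : ℝ) (β - m)) := by
            rw [hZlaw, withDensity_apply g measurableSet_Icc]
        _ ≤ νZ {z | y + z ≤ β} := measure_mono hsub
  -- sublevel bound under νY
  set F : ℝ → ℝ := fun y => max (β - max y 0) 0 with hF_def
  have hFmeas : Measurable F :=
    ((continuous_const.sub (continuous_id.max continuous_const)).max
      continuous_const).measurable
  have hYlevel : ∀ t ∈ Set.Ioo (0 : ℝ) β,
      ENNReal.ofReal (κs * (β - t) ^ ds) ≤ νY {y | t ≤ F y} := by
    rintro t ⟨ht0, htβ⟩
    have hα0 : (0 : ℝ) < β - t := by linarith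
    have hα1 : β - t ≤ 1 := by linarith
    have hsub : Set.Icc (0 : ℝ) (β - t) ⊆ {y | t ≤ F y} := by
      intro y hy
      simp only [Set.mem_Icc] at hy
      simp only [Set.mem_setOf_eq, hF_def]
      have : max y 0 = y := max_eq_left hy.1
      rw [this]
      exact le_max_of_le_left (by linarith [hy.2])
    have heq : νY (Set.Icc (0 : ℝ) (β - t)) = μ (h ⁻¹' Set.Icc (0 : ℝ) (β - t)) := by
      rw [hνY_def, Measure.map_apply hhX measurableSet_Icc, Set.preimage_comp,
        ← Measure.map_apply hX (hmeas_h measurableSet_Icc), hXlaw]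
    have hseteq : h ⁻¹' Set.Icc (0 : ℝ) (β - t) = {x | h x ≤ β - t} := by
      ext x
      simp [Set.mem_Icc, hh0 x]
    calc ENNReal.ofReal (κs * (β - t) ^ ds)
        ≤ μ {x | h x ≤ β - t} := hmu (β - t) ⟨hα0, hα1⟩
      _ = νY (Set.Icc (0 : ℝ) (β - t)) := by rw [heq, hseteq]
      _ ≤ νY {y | t ≤ F y} := measure_mono hsub
  -- real integral computation
  have hreal : ∫ t in Set.Ioo (0 : ℝ) β, κs * (β - t) ^ ds
      = κs * (β ^ (ds + 1) / (ds + 1)) := by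
    rw [← MeasureTheory.integral_Ioc_eq_integral_Ioo,
      ← intervalIntegral.integral_of_le hβ0.le]
    rw [intervalIntegral.integral_const_mul]
    have hcs := intervalIntegral.integral_comp_sub_left (a := (0:ℝ)) (b := β)
      (fun s => s ^ ds) β
    simp only [sub_zero, sub_self] at hcs
    rw [hcs, integral_rpow (Or.inl (by linarith)),
      Real.zero_rpow (by positivity), sub_zero]
  have hint : IntegrableOn (fun t => κs * (β - t) ^ ds) (Set.Ioo (0 : ℝ) β) := by
    have hcont : ContinuousOn (fun t => κs * (β - t) ^ ds) (Set.Icc (0 : ℝ) β) :=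
      continuousOn_const.mul
        ((continuousOn_const.sub continuousOn_id).rpow_const
          (fun x _ => Or.inr hds.le))
    exact (hcont.integrableOn_Icc).mono_set Set.Ioo_subset_Icc_self
  have hintpiece : ENNReal.ofReal (κs * (β ^ (ds + 1) / (ds + 1)))
      = ∫⁻ t in Set.Ioo (0 : ℝ) β, ENNReal.ofReal (κs * (β - t) ^ ds) := by
    rw [← hreal]
    exact ofReal_integral_eq_lintegral_ofReal hint
      ((ae_restrict_iff' measurableSet_Ioo).mpr (ae_of_all _ fun t ht =>
        mul_nonneg hκs.1.le (Real.rpow_nonneg (by linarith [ht.2]) ds)))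
  have hmeasset : MeasurableSet {p : ℝ × ℝ | p.1 + p.2 ≤ β} :=
    measurableSet_le (measurable_fst.add measurable_snd) measurable_const
  have hcompP : P {ω | h (X ω) + Z ω ≤ β} = ∫⁻ y, νZ {z | y + z ≤ β} ∂νY := by
    have h1 : {ω | h (X ω) + Z ω ≤ β}
        = (fun ω => (h (X ω), Z ω)) ⁻¹' {p : ℝ × ℝ | p.1 + p.2 ≤ β} := rfl
    rw [h1, ← Measure.map_apply (f := fun ω => (h (X ω), Z ω))
      (hhX.prodMk hZ) hmeasset, hprod, Measure.prod_apply hmeasset]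
    rfl
  have hmain : ENNReal.ofReal (κs * κp / (ds + 1) * β ^ (ds + 1))
      ≤ P {ω | h (X ω) + Z ω ≤ β} := by
    calc ENNReal.ofReal (κs * κp / (ds + 1) * β ^ (ds + 1))
        = ENNReal.ofReal κp * ENNReal.ofReal (κs * (β ^ (ds + 1) / (ds + 1))) := by
          rw [← ENNReal.ofReal_mul hκp.le]
          congr 1
          ring
      _ = ENNReal.ofReal κp
            * ∫⁻ t in Set.Ioo (0 : ℝ) β, ENNReal.ofReal (κs * (β - t) ^ ds) := by
          rw [hintpiece]
      _ ≤ ENNReal.ofReal κp * ∫⁻ t in Set.Ioo (0 : ℝ) β, νY {y | t ≤ F y} :=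
          mul_le_mul_right (lintegral_mono_ae ((ae_restrict_iff' measurableSet_Ioo).mpr
            (ae_of_all _ hYlevel))) _
      _ ≤ ENNReal.ofReal κp * ∫⁻ t in Set.Ioi (0 : ℝ), νY {y | t ≤ F y} :=
          mul_le_mul_right (lintegral_mono'
            (Measure.restrict_mono (fun t ht => ht.1) le_rfl) le_rfl) _
      _ = ENNReal.ofReal κp * ∫⁻ y, ENNReal.ofReal (F y) ∂νY := by
          rw [lintegral_eq_lintegral_meas_le (f := F) νY
            (ae_of_all _ fun y => le_max_right _ _) hFmeas.aemeasurable]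
      _ = ∫⁻ y, ENNReal.ofReal (κp * (β - max y 0)) ∂νY := by
          rw [← lintegral_const_mul' _ _ ENNReal.ofReal_ne_top]
          refine lintegral_congr fun y => ?_
          rw [show F y = max (β - max y 0) 0 from rfl, ofReal_max_zero,
            ← ENNReal.ofReal_mul hκp.le]
      _ ≤ ∫⁻ y, νZ {z | y + z ≤ β} ∂νY := lintegral_mono hinner
      _ = P {ω | h (X ω) + Z ω ≤ β} := hcompP.symm
  have hc0 : 0 ≤ κs * κp / (ds + 1) * β ^ (ds + 1) := by
    have h1 : 0 ≤ β ^ (ds + 1) := Real.rpow_nonneg hβ0.le _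
    have h2 := hκs.1
    positivity
  have hsetc : {ω | (fstar - f (X ω)) / (L * Θ) + Z ω > β}
      = {ω | h (X ω) + Z ω ≤ β}ᶜ := by
    ext ω
    simp only [Set.mem_compl_iff, Set.mem_setOf_eq, not_le]
    exact Iff.rfl
  have hmeasE : MeasurableSet {ω | h (X ω) + Z ω ≤ β} :=
    measurableSet_le (hhX.add hZ) measurable_const
  rw [hsetc, prob_compl_eq_one_sub hmeasE, ENNReal.ofReal_sub _ hc0,
    ENNReal.ofReal_one]
  exact tsub_le_tsub_left hmain 1
end

section
/- Let (X_i)_{i∈ℕ} be i.i.d. samples from μ, and let (W_i)_{i∈ℕ} be i.i.d. real random variables, independent of the X_i, whose common law is supported on the interval [a,b] and absolutely continuous with density bounded below by κ_p > 0 on [a,b]. For each T set Y_T^max = max_{1≤i≤T} (f(X_i) + W_i). Then for any sequence of positive reals (ω_T) with ω_T → ∞ and ω_T = o(T), the quantity (T/ω_T)^{1/(d_s+1)}·(f* + b − Y_T^max) converges to 0 in probability as T → ∞. -/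
open MeasureTheory ProbabilityTheory Real Filter

/-!
Write `Z i = f (X i) + W i` and `ε_T = β (ω_T / T)^{1/(d_s+1)}`. The event in question forces
`max_{i < T} Z i < f* + b - ε_T`. A rectangle argument gives `P(Z i ≥ f* + b - ε) ≥ C ε^{d_s+1}`
for small `ε`: the scattering inequality puts mass `≳ ε^{d_s}` where `f ≥ f* - ε/2`, and the
noise density puts mass `≳ ε` on `[b - ε/2, b]`. By independence the event then has probability
at most `(1 - C ε_T^{d_s+1})^T ≤ exp(-C β^{d_s+1} ω_T) → 0`.
-/

theorem ENNReal.ofReal_le_one_sub_ofReal_one_sub {x : ℝ} (hx : x ≤ 1) :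
    ENNReal.ofReal x ≤ 1 - ENNReal.ofReal (1 - x) := by
  rcases le_total x 0 with hx0 | hx0
  · simp [ENNReal.ofReal_of_nonpos hx0]
  · rw [ENNReal.ofReal_sub 1 hx0, ENNReal.ofReal_one,
      ENNReal.sub_sub_cancel ENNReal.one_ne_top (ENNReal.ofReal_le_one.2 hx)]

theorem ENNReal.one_sub_ofReal_le_ofReal_exp_neg {q : ℝ} (hq : 0 ≤ q) :
    1 - ENNReal.ofReal q ≤ ENNReal.ofReal (exp (-q)) := by
  rw [← ENNReal.ofReal_one, ← ENNReal.ofReal_sub 1 hq]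
  exact ENNReal.ofReal_le_ofReal (one_sub_le_exp_neg q)

theorem ofReal_mul_rpow_le_measure_of_scattering {𝒳 : Type*} [MeasurableSpace 𝒳]
    {μ : Measure 𝒳} [IsProbabilityMeasure μ] {f : 𝒳 → ℝ} {fstar fmin ds κs : ℝ}
    (hds : 0 ≤ ds) (hκs : κs ≤ 1)
    (hscatter : ∀ α ∈ Set.Ioc (0 : ℝ) 1,
      μ {x | f x < fstar - α * (fstar - fmin)} ≤ ENNReal.ofReal (1 - κs * α ^ ds))
    {α : ℝ} (hα : α ∈ Set.Ioc (0 : ℝ) 1) :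
    ENNReal.ofReal (κs * α ^ ds) ≤ μ {x | fstar - α * (fstar - fmin) ≤ f x} := by
  set s := {x | f x < fstar - α * (fstar - fmin)}
  have hcompl : {x | fstar - α * (fstar - fmin) ≤ f x} = sᶜ := by ext; simp [s]
  have hle_one : κs * α ^ ds ≤ 1 :=
    mul_le_one₀ hκs (rpow_nonneg hα.1.le ds) (rpow_le_one hα.1.le hα.2 hds)
  calc ENNReal.ofReal (κs * α ^ ds) ≤ 1 - ENNReal.ofReal (1 - κs * α ^ ds) :=
        ENNReal.ofReal_le_one_sub_ofReal_one_sub hle_one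
    _ ≤ 1 - μ s := tsub_le_tsub_left (hscatter α hα) 1
    _ ≤ μ sᶜ := by
        rw [tsub_le_iff_left, ← measure_univ (μ := μ)]
        exact measure_univ_le_add_compl s
    _ = _ := by rw [hcompl]

theorem mul_measure_le_withDensity {α : Type*} [MeasurableSpace α] (ρ : Measure α)
    {g : α → ENNReal} {s : Set α} {c : ENNReal} (hs : MeasurableSet s)
    (hlb : ∀ x ∈ s, c ≤ g x) : c * ρ s ≤ ρ.withDensity g s := by
  rw [withDensity_apply g hs, ← setLIntegral_const]
  exact setLIntegral_mono' hs hlb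

theorem ofReal_mul_rpow_le_prod_add_ge {𝒳 : Type*} [MeasurableSpace 𝒳]
    {μ : Measure 𝒳} [IsProbabilityMeasure μ] {f : 𝒳 → ℝ} {fstar fmin ds κs : ℝ}
    (hds : 0 ≤ ds) (hκs₀ : 0 ≤ κs) (hκs₁ : κs ≤ 1)
    (hscatter : ∀ α ∈ Set.Ioc (0 : ℝ) 1,
      μ {x | f x < fstar - α * (fstar - fmin)} ≤ ENNReal.ofReal (1 - κs * α ^ ds))
    {a b κp : ℝ} (hκp : 0 ≤ κp) {g : ℝ → ENNReal}
    (hlb : ∀ x ∈ Set.Icc a b, ENNReal.ofReal κp ≤ g x)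
    {D ε : ℝ} (hD : 2 * (fstar - fmin) ≤ D) (hε : 0 < ε) (hεD : ε ≤ D)
    (hεab : ε ≤ 2 * (b - a)) :
    ENNReal.ofReal (κs * κp / (2 * D ^ ds) * ε ^ (ds + 1)) ≤
      μ.prod (volume.withDensity g) {q | fstar + b - ε ≤ f q.1 + q.2} := by
  have hDpos : 0 < D := hε.trans_le hεD
  set α := ε / D
  have hα : α ∈ Set.Ioc (0 : ℝ) 1 := ⟨div_pos hε hDpos, (div_le_one hDpos).2 hεD⟩
  have hgap : α * (fstar - fmin) ≤ ε / 2 := by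
    rw [div_mul_eq_mul_div, div_le_div_iff₀ hDpos two_pos]
    nlinarith
  have hrect : {x | fstar - α * (fstar - fmin) ≤ f x} ×ˢ Set.Icc (b - ε / 2) b ⊆
      {q : 𝒳 × ℝ | fstar + b - ε ≤ f q.1 + q.2} := by
    rintro ⟨x, t⟩ ⟨hx, ht⟩
    simp only [Set.mem_ofPred_eq] at hx ⊢
    linarith [ht.1]
  have hnoise : ENNReal.ofReal (κp * (ε / 2)) ≤
      volume.withDensity g (Set.Icc (b - ε / 2) b) := by
    rw [ENNReal.ofReal_mul hκp, ← sub_sub_cancel b (ε / 2), ← Real.volume_Icc,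
      sub_sub_cancel]
    exact mul_measure_le_withDensity _ measurableSet_Icc fun x hx =>
      hlb x ⟨by linarith [hx.1], hx.2⟩
  have hconst : κs * κp / (2 * D ^ ds) * ε ^ (ds + 1) = κs * α ^ ds * (κp * (ε / 2)) := by
    rw [div_rpow hε.le hDpos.le, rpow_add_one hε.ne' ds]
    field_simp
  calc ENNReal.ofReal (κs * κp / (2 * D ^ ds) * ε ^ (ds + 1))
      = ENNReal.ofReal (κs * α ^ ds) * ENNReal.ofReal (κp * (ε / 2)) := by
        rw [hconst, ENNReal.ofReal_mul (by positivity)]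
    _ ≤ μ {x | fstar - α * (fstar - fmin) ≤ f x} *
          volume.withDensity g (Set.Icc (b - ε / 2) b) :=
        mul_le_mul' (ofReal_mul_rpow_le_measure_of_scattering hds hκs₁ hscatter hα) hnoise
    _ = _ := (Measure.prod_prod _ _).symm
    _ ≤ _ := measure_mono hrect

section Maximum

variable {Ω : Type*} [MeasurableSpace Ω] {P : Measure Ω} [IsProbabilityMeasure P]
  {Z : ℕ → Ω → ℝ}

theorem measure_iSup_lt_le_ofReal_exp (hZ : ∀ i, Measurable (Z i)) (hindep : iIndepFun Z P)
    {c q : ℝ} (hq : 0 ≤ q) (htail : ∀ i, ENNReal.ofReal q ≤ P {ω | c ≤ Z i ω}) (T : ℕ) :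
    P {ω | ⨆ i : Fin T, Z i ω < c} ≤ ENNReal.ofReal (exp (-(T * q))) := by
  have hsub : {ω | ⨆ i : Fin T, Z i ω < c} ⊆ ⋂ i ∈ Finset.range T, Z i ⁻¹' Set.Iio c := by
    intro ω hω
    simp only [Set.mem_iInter, Finset.mem_range]
    exact fun i hi => (le_ciSup (Set.finite_range fun j : Fin T => Z j ω).bddAbove
      ⟨i, hi⟩).trans_lt hω
  have hfactor : ∀ i, P (Z i ⁻¹' Set.Iio c) ≤ ENNReal.ofReal (exp (-q)) := fun i =>
    calc P (Z i ⁻¹' Set.Iio c) = 1 - P {ω | c ≤ Z i ω} := by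
          rw [← prob_compl_eq_one_sub (measurableSet_le measurable_const (hZ i))]
          congr 1; ext; simp
      _ ≤ 1 - ENNReal.ofReal q := tsub_le_tsub_left (htail i) 1
      _ ≤ ENNReal.ofReal (exp (-q)) := ENNReal.one_sub_ofReal_le_ofReal_exp_neg hq
  calc P {ω | ⨆ i : Fin T, Z i ω < c} ≤ P (⋂ i ∈ Finset.range T, Z i ⁻¹' Set.Iio c) :=
        measure_mono hsub
    _ = ∏ i ∈ Finset.range T, P (Z i ⁻¹' Set.Iio c) :=
        hindep.meas_biInter fun i _ => ⟨Set.Iio c, measurableSet_Iio, rfl⟩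
    _ ≤ ∏ _i ∈ Finset.range T, ENNReal.ofReal (exp (-q)) :=
        Finset.prod_le_prod' fun i _ => hfactor i
    _ = ENNReal.ofReal (exp (-(T * q))) := by
        rw [Finset.prod_const, Finset.card_range, ← ENNReal.ofReal_pow (exp_nonneg _),
          ← exp_nat_mul, mul_neg]


theorem measure_rpow_mul_sub_iSup_gt_le (hZ : ∀ i, Measurable (Z i)) (hindep : iIndepFun Z P)
    {M C r ε₀ : ℝ} (hC : 0 ≤ C) (hr : 0 < r)
    (htail : ∀ i, ∀ ε ∈ Set.Ioc 0 ε₀, ENNReal.ofReal (C * ε ^ r) ≤ P {ω | M - ε ≤ Z i ω})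
    {T : ℕ} (hT : 0 < T) {u β : ℝ} (hu : 0 < u) (hβ : 0 < β)
    (hε₀ : β * (u / T) ^ (1 / r) ≤ ε₀) :
    P {ω | ((T : ℝ) / u) ^ ((1 : ℝ) / r) * (M - ⨆ i : Fin T, Z i ω) > β} ≤
      ENNReal.ofReal (exp (-(C * β ^ r * u))) := by
  set ε := β * (u / T) ^ (1 / r)
  have hT' : (0 : ℝ) < T := Nat.cast_pos.2 hT
  have huT : 0 < u / T := div_pos hu hT'
  have hTu : 0 < (T : ℝ) / u := div_pos hT' hu
  have hε : 0 < ε := mul_pos hβ (rpow_pos_of_pos huT _)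
  have hscale : ((T : ℝ) / u) ^ ((1 : ℝ) / r) * ε = β := by
    have hinv : (T : ℝ) / u * (u / T) = 1 := by field_simp
    rw [mul_left_comm, ← mul_rpow hTu.le huT.le, hinv, one_rpow, mul_one]
  have hevent : {ω | ((T : ℝ) / u) ^ ((1 : ℝ) / r) * (M - ⨆ i : Fin T, Z i ω) > β} ⊆
      {ω | ⨆ i : Fin T, Z i ω < M - ε} := by
    intro ω hω
    have := lt_of_mul_lt_mul_left (hscale.trans_lt hω) (rpow_pos_of_pos hTu _).le
    simp only [Set.mem_ofPred_eq]
    linarith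
  have hexponent : T * (C * ε ^ r) = C * β ^ r * u := by
    rw [mul_rpow hβ.le (rpow_pos_of_pos huT _).le, ← rpow_mul huT.le,
      one_div_mul_cancel hr.ne', rpow_one]
    field_simp
  calc _ ≤ P {ω | ⨆ i : Fin T, Z i ω < M - ε} := measure_mono hevent
    _ ≤ _ := measure_iSup_lt_le_ofReal_exp hZ hindep (by positivity)
        (fun i => htail i ε ⟨hε, hε₀⟩) T
    _ = _ := by rw [hexponent]

theorem tendsto_measure_rpow_mul_sub_iSup_gt (hZ : ∀ i, Measurable (Z i))
    (hindep : iIndepFun Z P) {M C r ε₀ : ℝ} (hC : 0 < C) (hr : 0 < r) (hε₀ : 0 < ε₀)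
    (htail : ∀ i, ∀ ε ∈ Set.Ioc 0 ε₀, ENNReal.ofReal (C * ε ^ r) ≤ P {ω | M - ε ≤ Z i ω})
    {w : ℕ → ℝ} (hwpos : ∀ T, 0 < w T) (hw_top : Tendsto w atTop atTop)
    (hw_o : Tendsto (fun T : ℕ => w T / T) atTop (nhds 0)) {β : ℝ} (hβ : 0 < β) :
    Tendsto (fun T : ℕ => P {ω | ((T : ℝ) / w T) ^ ((1 : ℝ) / r) *
      (M - ⨆ i : Fin T, Z i ω) > β}) atTop (nhds 0) := by
  have hε : Tendsto (fun T : ℕ => β * (w T / T) ^ (1 / r)) atTop (nhds 0) := by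
    have := ((continuousAt_rpow_const 0 (1 / r) (Or.inr (by positivity))).tendsto.comp
      hw_o).const_mul β
    rwa [zero_rpow (by positivity), mul_zero] at this
  have hlim : Tendsto (fun T => ENNReal.ofReal (exp (-(C * β ^ r * w T)))) atTop (nhds 0) := by
    have := ENNReal.tendsto_ofReal (tendsto_exp_atBot.comp
      (tendsto_neg_atTop_atBot.comp (hw_top.const_mul_atTop (by positivity : 0 < C * β ^ r))))
    rwa [ENNReal.ofReal_zero] at this
  refine tendsto_of_tendsto_of_tendsto_of_le_of_le' tendsto_const_nhds hlim
    (Eventually.of_forall fun _ => zero_le) ?_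
  filter_upwards [hε.eventually_le_const hε₀, eventually_gt_atTop 0] with T hεT hT
  exact measure_rpow_mul_sub_iSup_gt_le hZ hindep hC.le hr htail hT (hwpos T) hβ hεT

end Maximum

theorem noisy_random_search_convergence_in_probability_general
    {𝒳 : Type*} [MetricSpace 𝒳] [MeasurableSpace 𝒳] [BorelSpace 𝒳]
    (μ : Measure 𝒳) [IsProbabilityMeasure μ]
    (f : 𝒳 → ℝ) (L : ℝ) (hf : LipschitzWith L.toNNReal f)
    (fstar fmin : ℝ)
    (ds κs : ℝ) (hds : 0 < ds) (hκs : κs ∈ Set.Ioc (0 : ℝ) 1)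
    (hscatter : ∀ α ∈ Set.Ioc (0 : ℝ) 1,
      μ {x | f x < fstar - α * (fstar - fmin)} ≤ ENNReal.ofReal (1 - κs * α ^ ds))
    (a b : ℝ) (hab : a < b) (κp : ℝ) (hκp : 0 < κp)
    (g : ℝ → ENNReal)
    (hlb : ∀ x ∈ Set.Icc a b, ENNReal.ofReal κp ≤ g x)
    {Ω : Type*} [MeasurableSpace Ω] (P : Measure Ω) [IsProbabilityMeasure P]
    (X : ℕ → Ω → 𝒳) (W : ℕ → Ω → ℝ)
    (hXmeas : ∀ i, Measurable (X i)) (hWmeas : ∀ i, Measurable (W i))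
    (hiid : iIndepFun (fun i ω => (X i ω, W i ω)) P)
    (hlaw : ∀ i, Measure.map (fun ω => (X i ω, W i ω)) P
      = μ.prod (volume.withDensity g))
    (w : ℕ → ℝ) (hwpos : ∀ T, 0 < w T)
    (hw_top : Tendsto w atTop atTop)
    (hw_o : Tendsto (fun T : ℕ => w T / T) atTop (nhds 0))
    (β : ℝ) (hβ : 0 < β) :
    Tendsto
      (fun T : ℕ =>
        P {ω | ((T : ℝ) / w T) ^ ((1 : ℝ) / (ds + 1)) *
            (fstar + b - ⨆ i : Fin T, (f (X i ω) + W i ω)) > β})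
      atTop (nhds 0) := by
  have hsum : Measurable fun q : 𝒳 × ℝ => f q.1 + q.2 :=
    (hf.continuous.measurable.comp measurable_fst).add measurable_snd
  set D := max (2 * (fstar - fmin)) 1
  have hD : 0 < D := lt_max_of_lt_right one_pos
  have hC : 0 < κs * κp / (2 * D ^ ds) := by
    have := hκs.1
    positivity
  refine tendsto_measure_rpow_mul_sub_iSup_gt (Z := fun i ω => f (X i ω) + W i ω)
    (fun i => hsum.comp ((hXmeas i).prodMk (hWmeas i)))
    (hiid.comp (fun _ q => f q.1 + q.2) fun _ => hsum) hC (by linarith)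
    (lt_min hD (by linarith : 0 < 2 * (b - a))) ?_ hwpos hw_top hw_o hβ
  intro i ε hε
  have hpre : {ω | fstar + b - ε ≤ f (X i ω) + W i ω} =
      (fun ω => (X i ω, W i ω)) ⁻¹' {q | fstar + b - ε ≤ f q.1 + q.2} := rfl
  rw [hpre, ← Measure.map_apply ((hXmeas i).prodMk (hWmeas i))
    (measurableSet_le measurable_const hsum), hlaw i]
  exact ofReal_mul_rpow_le_prod_add_ge hds.le hκs.1.le hκs.2 hscatter hκp.le hlb
    (le_max_left _ _) hε.1 (hε.2.trans (min_le_left _ _)) (hε.2.trans (min_le_right _ _))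

/-- **Random search in noisy environments (Theorem `thm:rs-noisy`).**
Let `(X i)` be i.i.d. samples from `μ` and `(W i)` i.i.d. real noise, independent of the
`X i`, whose common law has a density supported on `[a, b]` and bounded below by
`κp > 0` there (so that the pairs `(X i, W i)` are i.i.d. with law `μ × ν`).
Setting `Y T = max_{1 ≤ i ≤ T} (f (X i) + W i)`, for any positive sequence `ω_T → ∞`
with `ω_T = o(T)`, the quantity `(T / ω_T)^{1/(ds+1)} (f* + b - Y T)` converges to `0`
in probability. -/
theorem noisy_random_search_convergence_in_probability
    {𝒳 : Type*} [MetricSpace 𝒳] [CompactSpace 𝒳] [MeasurableSpace 𝒳] [BorelSpace 𝒳]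
    (μ : Measure 𝒳) [IsProbabilityMeasure μ]
    (f : 𝒳 → ℝ) (L : ℝ) (hL : 0 ≤ L) (hf : LipschitzWith L.toNNReal f)
    (fstar fmin Θ : ℝ)
    (hfstar : fstar = ⨆ x, f x) (hfmin : fmin = ⨅ x, f x)
    (hΘ : Θ = Metric.diam (Set.univ : Set 𝒳))
    (ds κs : ℝ) (hds : 0 < ds) (hκs : κs ∈ Set.Ioc (0 : ℝ) 1)
    (hscatter : ∀ α ∈ Set.Ioc (0 : ℝ) 1,
      μ {x | f x < fstar - α * (fstar - fmin)} ≤ ENNReal.ofReal (1 - κs * α ^ ds))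
    (a b : ℝ) (hab : a < b) (κp : ℝ) (hκp : 0 < κp)
    (g : ℝ → ENNReal) (hg : Measurable g)
    (hsupp : ∀ x ∉ Set.Icc a b, g x = 0)
    (hlb : ∀ x ∈ Set.Icc a b, ENNReal.ofReal κp ≤ g x)
    {Ω : Type*} [MeasurableSpace Ω] (P : Measure Ω) [IsProbabilityMeasure P]
    (X : ℕ → Ω → 𝒳) (W : ℕ → Ω → ℝ)
    (hXmeas : ∀ i, Measurable (X i)) (hWmeas : ∀ i, Measurable (W i))
    (hiid : iIndepFun (fun i ω => (X i ω, W i ω)) P)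
    (hlaw : ∀ i, Measure.map (fun ω => (X i ω, W i ω)) P
      = μ.prod (volume.withDensity g))
    (w : ℕ → ℝ) (hwpos : ∀ T, 0 < w T)
    (hw_top : Tendsto w atTop atTop)
    (hw_o : Tendsto (fun T : ℕ => w T / T) atTop (nhds 0))
    (β : ℝ) (hβ : 0 < β) :
    Tendsto
      (fun T : ℕ =>
        P {ω | ((T : ℝ) / w T) ^ ((1 : ℝ) / (ds + 1)) *
            (fstar + b - ⨆ i : Fin T, (f (X i ω) + W i ω)) > β})
      atTop (nhds 0) :=
  noisy_random_search_convergence_in_probability_general μ f L hf fstar fmin ds κs hds hκs hscatter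
    a b hab κp hκp g hlb P X W hXmeas hWmeas hiid hlaw w hwpos hw_top hw_o β hβ
end

section
/- Let p ≥ 1, d ≥ 1, and define g_p : [0,1]^d → ℝ by g_p(x) = 1 − (1/p)·‖x‖_∞^p. For any r ∈ (0,1], let X be uniformly distributed on the cube q = [0,r]^d. Then sup_{x∈q} g_p(x) = 1, inf_{x∈q} g_p(x) = 1 − r^p/p, and for every α ∈ (0,1], the probability that g_p(X) ≤ 1 − α·(r^p/p) equals 1 − α^{d/p}; equivalently, the probability that g_p(X) > (1−α)·sup_q g_p + α·inf_q g_p equals α^{d/p}. -/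
open MeasureTheory Real

/-- **Scattering computation for norm polynomials (Proposition `prop:gp`).**
For `g_p x = 1 - ‖x‖_∞^p / p` on `[0,1]^d` and `X` uniform on the cube `q = [0,r]^d`,
we have `sup_q g_p = 1`, `inf_q g_p = 1 - r^p/p`, and for every `α ∈ (0,1]` the
probability that `g_p X ≤ 1 - α r^p/p` equals `1 - α^{d/p}`, equivalently the
probability that `g_p X > (1-α) sup_q g_p + α inf_q g_p` equals `α^{d/p}`. -/
theorem scattering_of_norm_polynomial
    (d : ℕ) (hd : 1 ≤ d) (p : ℝ) (hp : 1 ≤ p) (r : ℝ) (hr : r ∈ Set.Ioc (0 : ℝ) 1)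
    (gp : (Fin d → ℝ) → ℝ) (hgp : gp = fun x => 1 - (1 / p) * ‖x‖ ^ p)
    (q : Set (Fin d → ℝ)) (hq : q = Set.Icc 0 (fun _ => r))
    (μq : Measure (Fin d → ℝ)) (hμq : μq = (volume q)⁻¹ • volume.restrict q) :
    sSup (gp '' q) = 1 ∧ sInf (gp '' q) = 1 - r ^ p / p ∧
    ∀ α ∈ Set.Ioc (0 : ℝ) 1,
      μq {x | gp x ≤ 1 - α * (r ^ p / p)}
          = ENNReal.ofReal (1 - α ^ ((d : ℝ) / p)) ∧
      μq {x | gp x > (1 - α) * sSup (gp '' q) + α * sInf (gp '' q)}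
          = ENNReal.ofReal (α ^ ((d : ℝ) / p)) := by
  obtain ⟨hr0, hr1⟩ := hr
  have hp0 : (0:ℝ) < p := lt_of_lt_of_le one_pos hp
  have hFin : Nonempty (Fin d) := ⟨⟨0, hd⟩⟩
  -- norm bounds on q
  have hmemq : ∀ x, x ∈ q ↔ ∀ i, 0 ≤ x i ∧ x i ≤ r := by
    intro x
    simp [hq, Set.mem_Icc, Pi.le_def, forall_and]
  have hnorm_le : ∀ x ∈ q, ‖x‖ ≤ r := by
    intro x hx
    rw [pi_norm_le_iff_of_nonneg hr0.le]
    intro i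
    rw [Real.norm_eq_abs, abs_of_nonneg ((hmemq x).1 hx i).1]
    exact ((hmemq x).1 hx i).2
  -- sup
  have hsup : IsGreatest (gp '' q) 1 := by
    constructor
    · refine ⟨0, ?_, ?_⟩
      · rw [hmemq]; intro i; simp [hr0.le]
      · simp [hgp, Real.zero_rpow hp0.ne']
    · rintro y ⟨x, _, rfl⟩
      simp only [hgp]
      have : 0 ≤ (1/p) * ‖x‖ ^ p := by positivity
      linarith
  have hinf : IsLeast (gp '' q) (1 - r ^ p / p) := by
    constructor
    · refine ⟨(fun _ => r), ?_, ?_⟩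
      · rw [hmemq]; intro i; simp [hr0.le]
      · simp only [hgp, pi_norm_const, Real.norm_eq_abs, abs_of_nonneg hr0.le]
        ring
    · rintro y ⟨x, hx, rfl⟩
      simp only [hgp]
      have h1 : ‖x‖ ^ p ≤ r ^ p :=
        Real.rpow_le_rpow (norm_nonneg x) (hnorm_le x hx) hp0.le
      have : (1/p) * ‖x‖ ^ p ≤ (1/p) * r ^ p := by
        apply mul_le_mul_of_nonneg_left h1; positivity
      have hrp : (1/p) * r ^ p = r ^ p / p := by ring
      linarith
  have hSup : sSup (gp '' q) = 1 := hsup.csSup_eq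
  have hInf : sInf (gp '' q) = 1 - r ^ p / p := hinf.csInf_eq
  refine ⟨hSup, hInf, ?_⟩
  rintro α ⟨hα0, hα1⟩
  -- threshold s
  set s : ℝ := α ^ (1/p) * r with hs_def
  have hs0 : 0 < s := mul_pos (Real.rpow_pos_of_pos hα0 _) hr0
  have hsr : s ≤ r := by
    have : α ^ (1/p) ≤ 1 := Real.rpow_le_one hα0.le hα1 (by positivity)
    calc s = α ^ (1/p) * r := rfl
      _ ≤ 1 * r := by nlinarith
      _ = r := one_mul r
  have hsp : s ^ p = α * r ^ p := by
    rw [hs_def, Real.mul_rpow (Real.rpow_nonneg hα0.le _) hr0.le,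
      ← Real.rpow_mul hα0.le, one_div_mul_cancel hp0.ne', Real.rpow_one]
  have hsd : s ^ d = α ^ ((d:ℝ)/p) * r ^ d := by
    rw [hs_def, mul_pow, ← Real.rpow_natCast (α ^ (1/p)) d, ← Real.rpow_mul hα0.le]
    congr 2
    ring
  have hαd1 : α ^ ((d:ℝ)/p) ≤ 1 := Real.rpow_le_one hα0.le hα1 (by positivity)
  have hαd0 : 0 < α ^ ((d:ℝ)/p) := Real.rpow_pos_of_pos hα0 _
  -- key pointwise characterization
  have hiff : ∀ x, gp x ≤ 1 - α * (r ^ p / p) ↔ s ≤ ‖x‖ := by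
    intro x
    rw [hgp]
    simp only
    rw [sub_le_sub_iff_left]
    have h1 : α * (r ^ p / p) = (α * r ^ p) / p := by ring
    have h2 : (1/p) * ‖x‖ ^ p = ‖x‖ ^ p / p := by ring
    rw [h1, h2, div_le_div_iff_of_pos_right hp0, ← hsp]
    exact Real.rpow_le_rpow_iff hs0.le (norm_nonneg x) hp0
  -- the inner box
  set B : Set (Fin d → ℝ) := Set.pi Set.univ (fun _ : Fin d => Set.Ico (0:ℝ) s) with hB_def
  have hBmeas : MeasurableSet B := MeasurableSet.univ_pi (fun _ => measurableSet_Ico)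
  have hBq : B ⊆ q := by
    intro x hx
    rw [hmemq]
    intro i
    have := hx i (Set.mem_univ i)
    exact ⟨this.1, le_trans (le_of_lt this.2) hsr⟩
  have hxB : ∀ x ∈ q, (x ∈ B ↔ ‖x‖ < s) := by
    intro x hx
    rw [pi_norm_lt_iff hs0]
    constructor
    · intro h i
      have := h i (Set.mem_univ i)
      rw [Real.norm_eq_abs, abs_of_nonneg this.1]
      exact this.2
    · intro h i _
      have h0 : 0 ≤ x i := ((hmemq x).1 hx i).1
      refine ⟨h0, ?_⟩
      have := h i
      rwa [Real.norm_eq_abs, abs_of_nonneg h0] at this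
  -- volumes
  have hvq : volume q = ENNReal.ofReal (r ^ d) := by
    rw [hq, Real.volume_Icc_pi]
    simp [← ENNReal.ofReal_pow hr0.le]
  have hvB : volume B = ENNReal.ofReal (s ^ d) := by
    rw [hB_def, volume_pi_pi]
    simp [Real.volume_Ico, ← ENNReal.ofReal_pow hs0.le]
  have hRd0 : (0:ℝ) < r ^ d := by positivity
  have hVne0 : ENNReal.ofReal (r ^ d) ≠ 0 := by
    simp [ENNReal.ofReal_eq_zero, not_le, hRd0]
  have hVnetop : ENNReal.ofReal (r ^ d) ≠ ⊤ := ENNReal.ofReal_ne_top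
  have hcancel : ∀ c : ENNReal, (ENNReal.ofReal (r ^ d))⁻¹ * (c * ENNReal.ofReal (r ^ d)) = c := by
    intro c
    rw [mul_comm c, ← mul_assoc, ENNReal.inv_mul_cancel hVne0 hVnetop, one_mul]
  -- first measure
  have hset1 : {x | gp x ≤ 1 - α * (r ^ p / p)} ∩ q = q \ B := by
    ext x
    simp only [Set.mem_inter_iff, Set.mem_setOf_eq, Set.mem_diff]
    constructor
    · rintro ⟨h1, h2⟩
      refine ⟨h2, ?_⟩
      rw [hxB x h2, not_lt]
      exact (hiff x).1 h1
    · rintro ⟨h2, h1⟩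
      rw [hxB x h2, not_lt] at h1
      exact ⟨(hiff x).2 h1, h2⟩
  have hset2 : {x | gp x > 1 - α * (r ^ p / p)} ∩ q = B := by
    ext x
    simp only [Set.mem_inter_iff, Set.mem_setOf_eq, gt_iff_lt]
    constructor
    · rintro ⟨h1, h2⟩
      rw [hxB x h2]
      by_contra h
      rw [not_lt] at h
      have := (hiff x).2 h
      linarith
    · intro hx
      have h2 := hBq hx
      refine ⟨?_, h2⟩
      have h3 := (hxB x h2).1 hx
      by_contra h
      rw [not_lt] at h
      have := (hiff x).1 h
      linarith
  have happly : ∀ A : Set (Fin d → ℝ),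
      μq A = (ENNReal.ofReal (r ^ d))⁻¹ * volume (A ∩ q) := by
    intro A
    rw [hμq, Measure.smul_apply, smul_eq_mul, hvq,
      Measure.restrict_apply' (hq ▸ measurableSet_Icc)]
  have hvdiff : volume (q \ B) = ENNReal.ofReal (1 - α ^ ((d:ℝ)/p)) * ENNReal.ofReal (r ^ d) := by
    rw [measure_diff hBq hBmeas.nullMeasurableSet (lt_of_le_of_lt (measure_mono hBq) (by rw [hvq]; exact ENNReal.ofReal_lt_top)).ne,
      hvq, hvB, ← ENNReal.ofReal_sub _ (by positivity), hsd]
    rw [← ENNReal.ofReal_mul (by linarith)]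
    congr 1
    ring
  constructor
  · rw [happly, hset1, hvdiff, hcancel]
  · have : (1 - α) * sSup (gp '' q) + α * sInf (gp '' q) = 1 - α * (r ^ p / p) := by
      rw [hSup, hInf]; ring
    rw [this, happly, hset2, hvB, hsd, ENNReal.ofReal_mul hαd0.le, hcancel]
end

section
/- Let d ≥ 1 be an integer, let 0 < d_z < d, let c > 0, and let f be a real-valued function on a compact subset 𝒳 of ℝ^d with maximum value 1, attained at x*. Let h ∈ (0,1] and let B be a cube of edge length h containing x*; write r₀ = c^{−1/(d−d_z)}·h^{d/(d−d_z)}. Suppose that for every r ∈ (0, r₀], the Lebesgue measure of S(r) = { x ∈ 𝒳 : 1 − f(x) ≤ r } equals c·r^{d−d_z}, and that B = S(r₀). Then sup_B f = 1, inf_B f = 1 − r₀, and for every α ∈ (0,1], if X is uniformly distributed on B, the probability that f(X) < sup_B f − α·(sup_B f − inf_B f) equals 1 − α^{d−d_z}. -/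
open MeasureTheory Real

/-- **Scattering dimension from zooming dimension (Appendix proposition).**
Let `f ≤ 1` on a compact `𝒳 ⊆ ℝ^d` attain its maximum `1` at `x*`, let `B` be a cube of
edge length `h ∈ (0,1]` containing `x*`, and let `r₀ = c^{-1/(d-dz)} h^{d/(d-dz)}`.
If for every `r ∈ (0, r₀]` the Lebesgue measure of `S(r) = {x ∈ 𝒳 : 1 - f x ≤ r}`
equals `c r^{d-dz}` and `B = S(r₀)`, then `sup_B f = 1`, `inf_B f = 1 - r₀`, and for
`X` uniform on `B` and every `α ∈ (0,1]`,
`ℙ (f X < sup_B f - α (sup_B f - inf_B f)) = 1 - α^{d-dz}`. -/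
theorem scattering_eq_dim_sub_zooming
    (d : ℕ) (hd : 1 ≤ d) (dz : ℝ) (hdz : 0 < dz) (hdzd : dz < d)
    (c : ℝ) (hc : 0 < c)
    (𝒳 : Set (Fin d → ℝ)) (h𝒳 : IsCompact 𝒳)
    (f : (Fin d → ℝ) → ℝ) (hfmeas : Measurable f)
    (xstar : Fin d → ℝ) (hxstar : xstar ∈ 𝒳)
    (hfmax : f xstar = 1) (hfle : ∀ x ∈ 𝒳, f x ≤ 1)
    (h : ℝ) (hh : h ∈ Set.Ioc (0 : ℝ) 1)
    (l : Fin d → ℝ) (B : Set (Fin d → ℝ)) (hB : B = Set.Icc l (fun i => l i + h))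
    (hxB : xstar ∈ B)
    (r₀ : ℝ) (hr₀ : r₀ = c ^ (-(1 : ℝ) / ((d : ℝ) - dz)) * h ^ ((d : ℝ) / ((d : ℝ) - dz)))
    (hS : ∀ r ∈ Set.Ioc (0 : ℝ) r₀,
      volume {x ∈ 𝒳 | 1 - f x ≤ r} = ENNReal.ofReal (c * r ^ ((d : ℝ) - dz)))
    (hBS : B = {x ∈ 𝒳 | 1 - f x ≤ r₀})
    (μB : Measure (Fin d → ℝ)) (hμB : μB = (volume B)⁻¹ • volume.restrict B) :
    sSup (f '' B) = 1 ∧ sInf (f '' B) = 1 - r₀ ∧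
    ∀ α ∈ Set.Ioc (0 : ℝ) 1,
      μB {x | f x < sSup (f '' B) - α * (sSup (f '' B) - sInf (f '' B))}
        = ENNReal.ofReal (1 - α ^ ((d : ℝ) - dz)) := by
  set D : ℝ := (d : ℝ) - dz with hDdef
  have hD : 0 < D := by simp [hDdef]; linarith
  have hr0pos : 0 < r₀ := by
    rw [hr₀]
    exact mul_pos (Real.rpow_pos_of_pos hc _) (Real.rpow_pos_of_pos hh.1 _)
  have hBsub : B ⊆ 𝒳 := by rw [hBS]; exact fun x hx => hx.1
  have hmem1 : (1 : ℝ) ∈ f '' B := ⟨xstar, hxB, hfmax⟩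
  have hbdd : ∀ y ∈ f '' B, y ≤ 1 := by
    rintro y ⟨x, hx, rfl⟩; exact hfle x (hBsub hx)
  have hlb : ∀ y ∈ f '' B, 1 - r₀ ≤ y := by
    rintro y ⟨x, hx, rfl⟩
    rw [hBS] at hx
    linarith [hx.2]
  have h1 : sSup (f '' B) = 1 := le_antisymm
    (csSup_le ⟨1, hmem1⟩ hbdd) (le_csSup ⟨1, hbdd⟩ hmem1)
  have hvolB : volume B = ENNReal.ofReal (c * r₀ ^ D) := by
    rw [hBS]; exact hS r₀ ⟨hr0pos, le_refl _⟩
  have h2 : sInf (f '' B) = 1 - r₀ := by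
    refine le_antisymm ?_ (le_csInf ⟨1, hmem1⟩ hlb)
    refine le_of_forall_pos_le_add ?_
    intro ε hε
    rcases le_or_gt r₀ ε with hle | hlt
    · calc sInf (f '' B) ≤ 1 := csInf_le ⟨1 - r₀, hlb⟩ hmem1
        _ ≤ 1 - r₀ + ε := by linarith
    · set r : ℝ := r₀ - ε with hrdef
      have hr : 0 < r := by simp [hrdef]; linarith
      have hrlt : r < r₀ := by simp [hrdef]; linarith
      have hex : ∃ x ∈ B, f x < 1 - r := by
        by_contra hcon
        push_neg at hcon
        have hsub : B ⊆ {x ∈ 𝒳 | 1 - f x ≤ r} := by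
          intro x hx
          exact ⟨hBsub hx, by linarith [hcon x hx]⟩
        have := measure_mono (μ := volume) hsub
        rw [hvolB, hS r ⟨hr, hrlt.le⟩] at this
        have hlt2 : c * r ^ D < c * r₀ ^ D :=
          mul_lt_mul_of_pos_left (Real.rpow_lt_rpow hr.le hrlt hD) hc
        have := (ENNReal.ofReal_le_ofReal_iff (by positivity)).1 this
        linarith
      obtain ⟨x, hxB', hfx⟩ := hex
      calc sInf (f '' B) ≤ f x := csInf_le ⟨1 - r₀, hlb⟩ ⟨x, hxB', rfl⟩
        _ ≤ 1 - r₀ + ε := by simp [hrdef] at hfx; linarith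
  refine ⟨h1, h2, ?_⟩
  intro α hα
  have hαr : α * r₀ ∈ Set.Ioc (0 : ℝ) r₀ := by
    constructor
    · exact mul_pos hα.1 hr0pos
    · nlinarith [hα.2, hr0pos]
  have hvolS : volume {x ∈ 𝒳 | 1 - f x ≤ α * r₀} = ENNReal.ofReal (c * (α * r₀) ^ D) :=
    hS _ hαr
  have hSsub : {x ∈ 𝒳 | 1 - f x ≤ α * r₀} ⊆ B := by
    rw [hBS]
    intro x hx
    exact ⟨hx.1, le_trans hx.2 hαr.2⟩
  have hSmeas : MeasurableSet {x ∈ 𝒳 | 1 - f x ≤ α * r₀} := by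
    have : {x ∈ 𝒳 | 1 - f x ≤ α * r₀} = 𝒳 ∩ (fun x => 1 - f x) ⁻¹' Set.Iic (α * r₀) := rfl
    rw [this]
    exact h𝒳.measurableSet.inter ((measurable_const.sub hfmeas) measurableSet_Iic)
  have hset : (1 : ℝ) - α * (1 - (1 - r₀)) = 1 - α * r₀ := by ring
  rw [h1, h2, hset]
  have hTmeas : MeasurableSet {x | f x < 1 - α * r₀} := hfmeas measurableSet_Iio
  rw [hμB]
  rw [Measure.smul_apply, Measure.restrict_apply hTmeas, smul_eq_mul]
  have hinter : {x | f x < 1 - α * r₀} ∩ B = B \ {x ∈ 𝒳 | 1 - f x ≤ α * r₀} := by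
    ext x
    simp only [Set.mem_inter_iff, Set.mem_setOf_eq, Set.mem_diff]
    constructor
    · rintro ⟨hfx, hxB2⟩
      exact ⟨hxB2, fun hmem => by linarith [hmem.2]⟩
    · rintro ⟨hxB2, hnot⟩
      refine ⟨?_, hxB2⟩
      by_contra hcon
      push_neg at hcon
      exact hnot ⟨hBsub hxB2, by linarith⟩
  rw [hinter, measure_diff hSsub hSmeas.nullMeasurableSet (by rw [hvolS]; exact ENNReal.ofReal_ne_top)]
  rw [hvolB, hvolS]
  have hmulr : (α * r₀ : ℝ) ^ D = α ^ D * r₀ ^ D := Real.mul_rpow hα.1.le hr0pos.le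
  have hα1 : α ^ D ≤ 1 := Real.rpow_le_one hα.1.le hα.2 hD.le
  have ha : 0 < c * r₀ ^ D := by positivity
  have hsubeq : c * r₀ ^ D - c * (α * r₀) ^ D = (c * r₀ ^ D) * (1 - α ^ D) := by
    rw [hmulr]; ring
  rw [← ENNReal.ofReal_sub _ (mul_nonneg hc.le (Real.rpow_nonneg (mul_nonneg hα.1.le hr0pos.le) _)), hsubeq,
    ENNReal.ofReal_mul ha.le, ← mul_assoc,
    ENNReal.inv_mul_cancel (by simp [ha]) ENNReal.ofReal_ne_top, one_mul]
end
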